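/- Let a ≥ 0, ε > 0, and |n| ≥ n̄ = 1 + ⌊2/ε⌋ (so ω_n > 0). Then for all t ≥ 0 and every l ∈ ℕ, |d^l H_n/dt^l (t)| ≤ (1/(2ω_n)) [ (2/ε)^l + (a + εn²)^l e^{-t(εn² - 2/ε)} ]. -/

import Mathlib

/-- `h_n = (a + ε n²)/2`. -/
noncomputable def hcoef (a ε : ℝ) (n : ℤ) : ℝ := (a + ε * (n : ℝ) ^ 2) / 2

/-- The real-valued fundamental oscillator solution `H_n(t)`:
`e^{-h t} sinh(ω t)/ω` when `ω² = h² - n² > 0`,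
`e^{-h t} sin(|ω| t)/|ω|` when `h² - n² < 0`, and `t e^{-h t}` when `h² = n²`. -/
noncomputable def Hfun (a ε : ℝ) (n : ℤ) (t : ℝ) : ℝ :=
  if 0 < (hcoef a ε n) ^ 2 - (n : ℝ) ^ 2 then
    Real.exp (-(hcoef a ε n) * t) *
      Real.sinh (Real.sqrt ((hcoef a ε n) ^ 2 - (n : ℝ) ^ 2) * t) /
      Real.sqrt ((hcoef a ε n) ^ 2 - (n : ℝ) ^ 2)
  else if (hcoef a ε n) ^ 2 - (n : ℝ) ^ 2 < 0 then
    Real.exp (-(hcoef a ε n) * t) *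
      Real.sin (Real.sqrt ((n : ℝ) ^ 2 - (hcoef a ε n) ^ 2) * t) /
      Real.sqrt ((n : ℝ) ^ 2 - (hcoef a ε n) ^ 2)
  else Real.exp (-(hcoef a ε n) * t) * t

/-- `n̄ = 1 + ⌊2/ε⌋`. -/
noncomputable def nbar (ε : ℝ) : ℤ := 1 + ⌊(2 : ℝ) / ε⌋

/-!
For `|n| ≥ n̄` one has `2/ε < |n| < h_n`, so `ω_n > 0` and
`H_n(t) = (e^{(ω_n - h_n) t} - e^{-(ω_n + h_n) t}) / (2 ω_n)`, whose derivatives are explicit.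
The two rates are controlled by `h_n - ω_n = n² / (h_n + ω_n) ≤ n² / h_n ≤ 2/ε` and
`εn² - 2/ε ≤ h_n + ω_n ≤ 2 h_n = a + εn²`, and the triangle inequality gives the bound.
-/

open Real

noncomputable def omegaCoef (a ε : ℝ) (n : ℤ) : ℝ := √(hcoef a ε n ^ 2 - (n : ℝ) ^ 2)

lemma iterate_deriv_exp_sub_exp_div (b c w : ℝ) (l : ℕ) :
    deriv^[l] (fun t => (exp (b * t) - exp (c * t)) / (2 * w)) =
      fun t => (b ^ l * exp (b * t) - c ^ l * exp (c * t)) / (2 * w) := by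
  induction l with
  | zero => simp
  | succ l ih =>
    rw [Function.iterate_succ_apply', ih]
    funext t
    have hb : HasDerivAt (fun t => exp (b * t)) (exp (b * t) * b) t := by
      simpa using ((hasDerivAt_id t).const_mul b).exp
    have hc : HasDerivAt (fun t => exp (c * t)) (exp (c * t) * c) t := by
      simpa using ((hasDerivAt_id t).const_mul c).exp
    refine (((hb.const_mul (b ^ l)).sub (hc.const_mul (c ^ l))).div_const (2 * w)).deriv.trans ?_
    ring

lemma abs_pow_mul_exp_le {b B t c : ℝ} (l : ℕ) (hb : |b| ≤ B) (hc : b * t ≤ c) :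
    |b ^ l * exp (b * t)| ≤ B ^ l * exp c := by
  rw [abs_mul, abs_pow, abs_exp]
  exact mul_le_mul (pow_le_pow_left₀ (abs_nonneg b) hb l) (exp_le_exp.2 hc) (exp_nonneg _)
    (pow_nonneg ((abs_nonneg b).trans hb) l)

lemma sub_sqrt_sq_sub_sq_le {h m : ℝ} (hh : 0 < h) (hm : m ^ 2 ≤ h ^ 2) :
    h - √(h ^ 2 - m ^ 2) ≤ m ^ 2 / h := by
  have hω := sq_sqrt (sub_nonneg.2 hm)
  have hω0 := sqrt_nonneg (h ^ 2 - m ^ 2)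
  have hωh : √(h ^ 2 - m ^ 2) ≤ h := by nlinarith
  rw [le_div_iff₀ hh]
  nlinarith [mul_nonneg hω0 (sub_nonneg.2 hωh)]

lemma two_div_lt_abs_of_nbar_le {ε : ℝ} {n : ℤ} (hn : nbar ε ≤ |n|) : 2 / ε < |(n : ℝ)| := by
  have hcast : ((nbar ε : ℤ) : ℝ) ≤ |(n : ℝ)| := by
    rw [← Int.cast_abs]
    exact_mod_cast hn
  have hfloor : 2 / ε < ((nbar ε : ℤ) : ℝ) := by
    rw [nbar, Int.cast_add, Int.cast_one, add_comm]
    exact Int.lt_floor_add_one _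
  linarith

lemma abs_lt_hcoef {a ε : ℝ} {n : ℤ} (ha : 0 ≤ a) (hε : 0 < ε) (hn : 2 / ε < |(n : ℝ)|) :
    |(n : ℝ)| < hcoef a ε n := by
  have hεn : 2 < ε * |(n : ℝ)| := by rwa [div_lt_iff₀' hε] at hn
  have hn0 : 0 < |(n : ℝ)| := (div_pos two_pos hε).trans hn
  rw [hcoef, ← sq_abs]
  nlinarith

lemma hcoef_sub_omegaCoef_le {a ε : ℝ} {n : ℤ} (ha : 0 ≤ a) (hε : 0 < ε)
    (hn : |(n : ℝ)| < hcoef a ε n) : hcoef a ε n - omegaCoef a ε n ≤ 2 / ε := by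
  have hh : 0 < hcoef a ε n := (abs_nonneg _).trans_lt hn
  have hsq : (n : ℝ) ^ 2 ≤ hcoef a ε n ^ 2 := by
    rw [← sq_abs]
    exact pow_le_pow_left₀ (abs_nonneg _) hn.le 2
  refine (sub_sqrt_sq_sub_sq_le hh hsq).trans ?_
  rw [div_le_div_iff₀ hh hε, hcoef]
  nlinarith

lemma omegaCoef_le_hcoef {a ε : ℝ} {n : ℤ} (hh : 0 ≤ hcoef a ε n) :
    omegaCoef a ε n ≤ hcoef a ε n :=
  (sqrt_le_left hh).2 (by linarith [sq_nonneg (n : ℝ)])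

lemma Hfun_eq_exp_sub_exp {a ε : ℝ} {n : ℤ} (hpos : 0 < hcoef a ε n ^ 2 - (n : ℝ) ^ 2) :
    Hfun a ε n = fun t =>
      (exp ((omegaCoef a ε n - hcoef a ε n) * t) - exp (-(omegaCoef a ε n + hcoef a ε n) * t)) /
        (2 * omegaCoef a ε n) := by
  funext t
  set ω := omegaCoef a ε n
  set h := hcoef a ε n
  rw [Hfun, if_pos hpos, ← omegaCoef, sinh_eq, show (ω - h) * t = ω * t + -h * t by ring,
    show -(ω + h) * t = -(ω * t) + -h * t by ring, exp_add, exp_add]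
  ring

theorem stmt12 (a ε : ℝ) (ha : 0 ≤ a) (hε : 0 < ε) (n : ℤ) (hn : nbar ε ≤ |n|)
    (l : ℕ) (t : ℝ) (ht : 0 ≤ t) :
    |deriv^[l] (Hfun a ε n) t| ≤
      (1 / (2 * Real.sqrt ((hcoef a ε n) ^ 2 - (n : ℝ) ^ 2))) *
        ((2 / ε) ^ l +
          (a + ε * (n : ℝ) ^ 2) ^ l * Real.exp (-t * (ε * (n : ℝ) ^ 2 - 2 / ε))) := by
  set h := hcoef a ε n with hh
  set ω := omegaCoef a ε n
  have hnh : |(n : ℝ)| < h := abs_lt_hcoef ha hε (two_div_lt_abs_of_nbar_le hn)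
  have hpos : 0 < h ^ 2 - (n : ℝ) ^ 2 := by
    rw [sub_pos, ← sq_abs]
    exact pow_lt_pow_left₀ hnh (abs_nonneg _) two_ne_zero
  have hω : 0 < ω := sqrt_pos.2 hpos
  have hgap : h - ω ≤ 2 / ε := hcoef_sub_omegaCoef_le ha hε hnh
  have hωh : ω ≤ h := omegaCoef_le_hcoef ((abs_nonneg _).trans hnh.le)
  have hslow : |(ω - h) ^ l * exp ((ω - h) * t)| ≤ (2 / ε) ^ l * exp 0 :=
    abs_pow_mul_exp_le l (by rw [abs_of_nonpos (by linarith)]; linarith)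
      (mul_nonpos_of_nonpos_of_nonneg (by linarith) ht)
  have hfast : |(-(ω + h)) ^ l * exp (-(ω + h) * t)| ≤
      (a + ε * (n : ℝ) ^ 2) ^ l * exp (-t * (ε * (n : ℝ) ^ 2 - 2 / ε)) := by
    have h2h : 2 * h = a + ε * (n : ℝ) ^ 2 := by rw [hh, hcoef]; ring
    refine abs_pow_mul_exp_le l ?_ ?_
    · rw [abs_neg, abs_of_pos (by linarith)]
      linarith
    · nlinarith
  change |deriv^[l] (Hfun a ε n) t| ≤ 1 / (2 * ω) * _
  rw [Hfun_eq_exp_sub_exp hpos, iterate_deriv_exp_sub_exp_div, abs_div,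
    abs_of_pos (mul_pos two_pos hω), one_div_mul_eq_div]
  gcongr
  rw [exp_zero, mul_one] at hslow
  exact (abs_sub _ _).trans (add_le_add hslow hfast)
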